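/- arXiv:2103.04603 — 4 statements merged into one kernel-verified Lean document; each statement's English description precedes it below -/
import Mathlib

section
/- Let V be a finite-dimensional real vector space with a symmetric bilinear form (x·y) satisfying the Hodge index property: whenever x·x > 0 and x·y = 0, one has y·y ≤ 0. Let L, H, C ∈ V satisfy: L·L > 0, L·H ≥ 0, (2(L·H)/(L·L))L − H is a vector A with A·A ≥ 0 and A·C ≥ 0, H·(L − C) ≥ 0, and, in case (L·H)/(L·L) L − H = 0, additionally C·H = ((L·H)/(L·L))(C·L). Then 2(C·L)(L·H) − (C·H)(L·L) − (L·H)(C·C) ≥ 0. -/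
/-!
By the Hodge index property the form is negative semidefinite on `L^⊥`, so the projections of `C`
and `H` to `L^⊥` satisfy a reversed Cauchy–Schwarz inequality. Combined with `C² L² ≤ (C·L)²` and
`H² = A² ≥ 0` it gives `(L·H)² L² C² ≤ L²(C·H) (2(C·L)(L·H) - L²(C·H))`. Since `A·C ≥ 0` and
`C·H ≤ L·H`, the right-hand side is at most `L²(L·H) (2(C·L)(L·H) - L²(C·H))`, and dividing by
`L²(L·H)` gives the claim (for `L·H = 0` it is `A·C ≥ 0` itself).
-/

namespace LinearMap.BilinForm

variable {R V : Type*} [CommRing R] [AddCommGroup V] [Module R V]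

def HodgeIndex [Preorder R] (q : LinearMap.BilinForm R V) : Prop :=
  ∀ x y, 0 < q x x → q x y = 0 → q y y ≤ 0

/-- For `t = 2 (L·H) / L²`, `H - t • L` is the reflection of `H` in `L^⊥`. -/
theorem apply_smul_sub_of_mul_eq {q : LinearMap.BilinForm R V} (hq : q.IsSymm) {L H : V} {t : R}
    (ht : t * q L L = 2 * q L H) : q (t • L - H) (t • L - H) = q H H := by
  have hLH := hq.eq H L
  simp only [map_sub, map_smul, LinearMap.sub_apply, LinearMap.smul_apply, smul_eq_mul]
  linear_combination t * ht - t * hLH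

variable [LinearOrder R] [IsStrictOrderedRing R] {q : LinearMap.BilinForm R V}

theorem HodgeIndex.mul_apply_le (hH : q.HodgeIndex) {x : V} (hx : 0 < q x x) (y : V) :
    q x x * q y y ≤ q x y * q y x := by
  have hw : q x (q x y • x - q x x • y) = 0 := by
    simp only [map_sub, map_smul, smul_eq_mul]
    ring
  have := hH x _ hx hw
  rw [apply_smul_sub_smul_sub_eq] at this
  nlinarith

theorem HodgeIndex.sq_sub_mul_le (hH : q.HodgeIndex) (hq : q.IsSymm) {x : V} (hx : 0 < q x x)
    (u v : V) :
    (q x x * q u v - q x u * q x v) ^ 2 ≤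
      (q x u ^ 2 - q x x * q u u) * (q x v ^ 2 - q x x * q v v) := by
  set K := LinearMap.ker (q x)
  have hproj (y : V) : q x y • x - q x x • y ∈ K := by
    simp only [K, LinearMap.mem_ker, map_sub, map_smul, smul_eq_mul]
    ring
  -- Cauchy–Schwarz for `-q`, which is positive semidefinite on `K = x^⊥`
  have hcs := apply_mul_apply_le_of_forall_zero_le ((-q).domRestrict₁₂ K K)
    (fun w => neg_nonneg.2 (hH x w hx w.2)) ⟨_, hproj u⟩ ⟨_, hproj v⟩
  simp only [LinearMap.domRestrict₁₂_apply, LinearMap.neg_apply, map_sub, map_smul,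
    LinearMap.sub_apply, LinearMap.smul_apply, smul_eq_mul] at hcs
  rw [hq.eq u x, hq.eq v x, hq.eq v u] at hcs
  refine le_of_mul_le_mul_left ?_ (pow_pos hx 2)
  linear_combination hcs

end LinearMap.BilinForm

open LinearMap.BilinForm in
theorem stmt1_general (V : Type*) [AddCommGroup V] [Module ℝ V]
    (q : LinearMap.BilinForm ℝ V) (hsym : ∀ x y, q x y = q y x)
    (hodge : ∀ x y, 0 < q x x → q x y = 0 → q y y ≤ 0)
    (L H C : V)
    (hLL : 0 < q L L) (hLH : 0 ≤ q L H)
    (A : V) (hA : A = (2 * q L H / q L L) • L - H)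
    (hAA : 0 ≤ q A A) (hAC : 0 ≤ q A C)
    (hHLC : 0 ≤ q H (L - C)) :
    0 ≤ 2 * q C L * q L H - q C H * q L L - q L H * q C C := by
  have hq : q.IsSymm := ⟨hsym⟩
  have hH : q.HodgeIndex := hodge
  have hHH : 0 ≤ q H H := by
    rwa [hA, apply_smul_sub_of_mul_eq hq (div_mul_cancel₀ _ hLL.ne')] at hAA
  have hCH : q C H ≤ q L H := by
    simpa [hsym H L, hsym H C] using hHLC
  have hACd : q C H * q L L ≤ 2 * q L H * q L C := by
    rw [hA] at hAC
    simp only [map_sub, map_smul, LinearMap.sub_apply, LinearMap.smul_apply, smul_eq_mul,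
      hsym H C, sub_nonneg] at hAC
    rwa [div_mul_eq_mul_div, le_div_iff₀ hLL] at hAC
  have hCC := hH.mul_apply_le hLL C
  have hCS := hH.sq_sub_mul_le hq hLL C H
  rw [hsym C L] at hCC ⊢
  set d := q L L
  set a := q L H
  set c := q L C
  set h := q C H
  have hkey : a ^ 2 * (d * q C C) ≤ d * h * (2 * a * c - d * h) := by
    nlinarith [mul_nonneg (sub_nonneg.2 hCC) (mul_nonneg hLL.le hHH)]
  have hmono : d * h * (2 * a * c - d * h) ≤ d * a * (2 * a * c - d * h) :=
    mul_le_mul_of_nonneg_right (mul_le_mul_of_nonneg_left hCH hLL.le) (by linarith)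
  rcases hLH.eq_or_lt with ha | ha
  · rw [← ha] at hACd ⊢
    linarith
  · have := le_of_mul_le_mul_left (a := d * a) (b := a * q C C) (c := 2 * a * c - d * h)
      (by nlinarith) (mul_pos hLL ha)
    linarith

/-- Abstract form of Proposition 5.1: key intersection-theoretic inequality on
surfaces, under the Hodge index property. -/
theorem stmt1 (V : Type*) [AddCommGroup V] [Module ℝ V]
    (q : LinearMap.BilinForm ℝ V) (hsym : ∀ x y, q x y = q y x)
    (hodge : ∀ x y, 0 < q x x → q x y = 0 → q y y ≤ 0)
    (L H C : V)
    (hLL : 0 < q L L) (hLH : 0 ≤ q L H)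
    (A : V) (hA : A = (2 * q L H / q L L) • L - H)
    (hAA : 0 ≤ q A A) (hAC : 0 ≤ q A C)
    (hHLC : 0 ≤ q H (L - C))
    (hdeg : (q L H / q L L) • L - H = 0 → q C H = (q L H / q L L) * q C L) :
    0 ≤ 2 * q C L * q L H - q C H * q L L - q L H * q C C :=
  stmt1_general V q hsym hodge L H C hLL hLH A hA hAA hAC hHLC
end

section
/- Let M be a finite-dimensional real vector space, C ⊆ M a polytope (compact convex hull of finitely many points), σ ⊆ M a closed convex cone with σ ∩ (−σ) = {0}, and P = C + σ. Then for every x ∈ P there exists a point y lying on a face of C that is also a face of P, such that x − y ∈ σ. -/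
/-
Fix a functional `ℓ` that is positive on `σ \ {0}`: for each unit vector `v` of `σ`, Farkas'
lemma separates `-v` from `σ`, and by compactness of the unit sphere finitely many of these
functionals add up to `ℓ`. Let `y` minimize `ℓ` on the compact set `C ∩ (x - σ)`. Then no
`c ≠ y` in `C` has `y - c ∈ σ`, so the cone spanned by `C - y`, which is finitely generated and
hence closed, meets `-σ` only in `0`. Separating it from the compact slice `σ ∩ {ℓ = 1}` gives a
functional `g` that is nonnegative on `C - y` and positive on `σ \ {0}`. The set where `g` attains
its minimum on `C` contains `y` and is a face both of `C` and of `C + σ`.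
-/

open Pointwise

/-- `F` is a face of the convex set `K`: either `K` itself or the intersection
of `K` with a supporting hyperplane. -/
def IsFace {M : Type*} [AddCommGroup M] [Module ℝ M] (K F : Set M) : Prop :=
  F = K ∨ ∃ (ℓ : M →ₗ[ℝ] ℝ) (r : ℝ), (∀ z ∈ K, ℓ z ≤ r) ∧ F = {z ∈ K | ℓ z = r}

lemma Convex.add_mem_of_smul_mem {E : Type*} [AddCommGroup E] [Module ℝ E] {S : Set E}
    (hS : Convex ℝ S) (hsmul : ∀ c : ℝ, 0 ≤ c → ∀ x ∈ S, c • x ∈ S) {x y : E} (hx : x ∈ S)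
    (hy : y ∈ S) : x + y ∈ S := by
  have := hsmul 2 zero_le_two _ (hS hx hy (by norm_num : (0 : ℝ) ≤ 1 / 2)
    (by norm_num : (0 : ℝ) ≤ 1 / 2) (by norm_num))
  convert this using 1
  module

namespace PointedCone

section FG

variable {E : Type*} [AddCommGroup E] [Module ℝ E]

lemma exists_nonneg_sum_smul_eq_of_mem_hull {t : Finset E} {z : E}
    (hz : z ∈ hull ℝ (t : Set E)) : ∃ f : E → ℝ, (∀ u ∈ t, 0 ≤ f u) ∧ ∑ u ∈ t, f u • u = z := by
  obtain ⟨f, -, rfl⟩ := Submodule.mem_span_finset.mp hz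
  exact ⟨fun u => f u, fun u _ => (f u).2, rfl⟩

lemma sum_smul_mem_hull {t : Finset E} {f : E → ℝ} (hf : ∀ u ∈ t, 0 ≤ f u) :
    ∑ u ∈ t, f u • u ∈ hull ℝ (t : Set E) :=
  Submodule.sum_mem _ fun u hu => (hull ℝ _).smul_mem (hf u hu) (subset_hull hu)

lemma exists_pos_sum_smul_eq_zero_of_not_linearIndepOn {t : Finset E}
    (ht : ¬LinearIndepOn ℝ id (t : Set E)) :
    ∃ p : E → ℝ, ∑ u ∈ t, p u • u = 0 ∧ ∃ u ∈ t, 0 < p u := by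
  obtain ⟨p, hp, u, hu, hpu⟩ := not_linearIndepOn_finset_iff.mp ht
  rcases hpu.lt_or_gt with hneg | hpos
  · exact ⟨-p, by simpa [neg_smul, Finset.sum_neg_distrib] using hp, u, hu, by simpa using hneg⟩
  · exact ⟨p, hp, u, hu, hpos⟩

lemma exists_mem_hull_erase_of_not_linearIndepOn [DecidableEq E] {t : Finset E}
    (ht : ¬LinearIndepOn ℝ id (t : Set E)) {z : E} (hz : z ∈ hull ℝ (t : Set E)) :
    ∃ u ∈ t, z ∈ hull ℝ ((t.erase u : Finset E) : Set E) := by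
  obtain ⟨f, hf, rfl⟩ := exists_nonneg_sum_smul_eq_of_mem_hull hz
  obtain ⟨p, hp, hpos⟩ := exists_pos_sum_smul_eq_zero_of_not_linearIndepOn ht
  obtain ⟨u₀, hu₀, hmin⟩ := (t.filter (0 < p ·)).exists_min_image (fun u => f u / p u)
    (by simpa [Finset.filter_nonempty_iff] using hpos)
  rw [Finset.mem_filter] at hu₀
  -- subtracting `c • p` keeps the coefficients nonnegative and kills the one at `u₀`
  set c := f u₀ / p u₀
  have hc : 0 ≤ c := div_nonneg (hf _ hu₀.1) hu₀.2.le
  have hsum : ∑ u ∈ t, f u • u = ∑ u ∈ t.erase u₀, (f u - c * p u) • u := by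
    rw [Finset.sum_erase _ (by simp [c, div_mul_cancel₀ _ hu₀.2.ne'])]
    simp only [sub_smul, Finset.sum_sub_distrib, mul_smul, ← Finset.smul_sum, hp, smul_zero,
      sub_zero]
  refine ⟨u₀, hu₀.1, hsum ▸ sum_smul_mem_hull fun u hu => ?_⟩
  have hut := Finset.mem_of_mem_erase hu
  rcases lt_or_ge 0 (p u) with hpu | hpu
  · have := hmin u (Finset.mem_filter.mpr ⟨hut, hpu⟩)
    rw [le_div_iff₀ hpu] at this
    linarith
  · nlinarith [hf u hut]

theorem exists_linearIndepOn_of_mem_hull (t : Finset E) {z : E} (hz : z ∈ hull ℝ (t : Set E)) :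
    ∃ u ⊆ t, LinearIndepOn ℝ id (u : Set E) ∧ z ∈ hull ℝ (u : Set E) := by
  classical
  induction t using Finset.strongInduction with
  | H t ih =>
    by_cases ht : LinearIndepOn ℝ id (t : Set E)
    · exact ⟨t, subset_rfl, ht, hz⟩
    obtain ⟨u₀, hu₀, hz'⟩ := exists_mem_hull_erase_of_not_linearIndepOn ht hz
    obtain ⟨u, hu, hli, hzu⟩ := ih _ (Finset.erase_ssubset hu₀) hz'
    exact ⟨u, hu.trans (Finset.erase_subset _ _), hli, hzu⟩

variable [TopologicalSpace E] [IsTopologicalAddGroup E] [ContinuousSMul ℝ E] [T2Space E]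

lemma isClosed_hull_of_linearIndepOn {t : Finset E} (ht : LinearIndepOn ℝ id (t : Set E)) :
    IsClosed (hull ℝ (t : Set E) : Set E) := by
  set φ := Fintype.linearCombination ℝ (fun u : t => (u : E))
  have himage : (hull ℝ (t : Set E) : Set E) = φ '' Set.Ici 0 := by
    ext z
    constructor
    · intro hz
      obtain ⟨f, hf, rfl⟩ := exists_nonneg_sum_smul_eq_of_mem_hull hz
      refine ⟨fun u => f u, fun u => hf u u.2, ?_⟩
      simp [φ, Fintype.linearCombination_apply, Finset.sum_attach t (fun u => f u • u)]
    · rintro ⟨c, hc, rfl⟩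
      rw [Fintype.linearCombination_apply]
      exact Submodule.sum_mem _ fun u _ => (hull ℝ _).smul_mem (hc u) (subset_hull u.2)
  have hinj : LinearMap.ker φ = ⊥ :=
    LinearMap.ker_eq_bot.mpr (linearIndependent_iff_injective_fintypeLinearCombination.mp ht)
  rw [himage]
  exact (LinearMap.isClosedEmbedding_of_injective hinj).isClosedMap _ isClosed_Ici

theorem isClosed_hull_finset (t : Finset E) : IsClosed (hull ℝ (t : Set E) : Set E) := by
  classical
  have hunion : (hull ℝ (t : Set E) : Set E) =
      ⋃ u ∈ t.powerset.filter (fun u : Finset E => LinearIndepOn ℝ id (u : Set E)),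
        (hull ℝ (u : Set E) : Set E) := by
    refine subset_antisymm (fun z hz => ?_) (Set.iUnion₂_subset fun u hu => ?_)
    · obtain ⟨u, hut, hli, hzu⟩ := exists_linearIndepOn_of_mem_hull t hz
      exact Set.mem_biUnion (by simpa [hut] using hli) hzu
    · exact Submodule.span_mono (by simpa using (Finset.mem_filter.mp hu).1)
  rw [hunion]
  exact isClosed_biUnion_finset fun u hu =>
    isClosed_hull_of_linearIndepOn (Finset.mem_filter.mp hu).2

end FG

section Dual

variable {E : Type*} [NormedAddCommGroup E] [NormedSpace ℝ E] [FiniteDimensional ℝ E]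

theorem exists_dual_ge_mul_norm_of_salient (σ : PointedCone ℝ E) (hσ : IsClosed (σ : Set E))
    (hsal : (σ : ConvexCone ℝ E).Salient) :
    ∃ ℓ : StrongDual ℝ E, ∃ m > 0, ∀ v ∈ σ, m * ‖v‖ ≤ ℓ v := by
  have hsep : ∀ v : E, ∃ f : StrongDual ℝ E, (∀ z ∈ σ, 0 ≤ f z) ∧ (v ∈ σ → v ≠ 0 → 0 < f v) := by
    intro v
    by_cases hv : v ∈ σ ∧ v ≠ 0
    · obtain ⟨f, hf, hfv⟩ := ProperCone.hyperplane_separation_point ⟨σ, hσ⟩ (hsal v hv.1 hv.2)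
      exact ⟨f, hf, fun _ _ => by simpa using hfv⟩
    · exact ⟨0, by simp, fun h₁ h₂ => (hv ⟨h₁, h₂⟩).elim⟩
  choose f hf_nonneg hf_pos using hsep
  set S := (σ : Set E) ∩ Metric.sphere 0 1
  have hS : IsCompact S := (isCompact_sphere 0 1).inter_left hσ
  obtain ⟨t, ht⟩ := hS.elim_finite_subcover (fun v => {z | 0 < f v z})
    (fun v => isOpen_lt continuous_const (f v).continuous)
    (fun z hz => Set.mem_iUnion.2 ⟨z, hf_pos z hz.1 (ne_zero_of_mem_unit_sphere ⟨z, hz.2⟩)⟩)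
  set ℓ := ∑ v ∈ t, f v
  have hℓS : ∀ z ∈ S, 0 < ℓ z := fun z hz => by
    obtain ⟨v, hvt, hv⟩ := Set.mem_iUnion₂.1 (ht hz)
    rw [_root_.sum_apply]
    exact Finset.sum_pos' (fun u _ => hf_nonneg u z hz.1) ⟨v, hvt, hv⟩
  obtain ⟨m, hm, hmS⟩ := hS.exists_forall_le' ℓ.continuous.continuousOn hℓS
  refine ⟨ℓ, m, hm, fun v hv => ?_⟩
  rcases eq_or_ne v 0 with rfl | hv0
  · simp
  have hvS : ‖v‖⁻¹ • v ∈ S := ⟨σ.smul_mem (by positivity) hv, by simp [norm_smul, hv0]⟩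
  have := hmS _ hvS
  rw [map_smul, smul_eq_mul, le_inv_mul_iff₀ (norm_pos_iff.mpr hv0)] at this
  linarith

theorem exists_dual_nonneg_and_pos_of_salient (K σ : PointedCone ℝ E)
    (hK : IsClosed (K : Set E)) (hσ : IsClosed (σ : Set E)) (hsal : (σ : ConvexCone ℝ E).Salient)
    (hKσ : ∀ v ∈ σ, -v ∈ K → v = 0) :
    ∃ g : StrongDual ℝ E, (∀ k ∈ K, 0 ≤ g k) ∧ ∀ v ∈ σ, v ≠ 0 → 0 < g v := by
  obtain ⟨ℓ, m, hm, hℓ⟩ := σ.exists_dual_ge_mul_norm_of_salient hσ hsal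
  set B := (σ : Set E) ∩ {v | ℓ v = 1}
  have hB : IsCompact B := by
    refine Metric.isCompact_of_isClosed_isBounded (hσ.inter (isClosed_eq ℓ.continuous
      continuous_const)) ((Metric.isBounded_closedBall (x := 0) (r := m⁻¹)).subset fun v hv => ?_)
    have := hℓ v hv.1
    rw [hv.2] at this
    rw [Metric.mem_closedBall, dist_zero_right, ← one_div, le_div_iff₀ hm]
    linarith
  have hBconv : Convex ℝ B := σ.convex.inter (convex_hyperplane ℓ.isLinear 1)
  have hdisj : Disjoint (-B) (K : Set E) := Set.disjoint_left.2 fun v hv hvK => by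
    have h0 : -v = 0 := hKσ _ hv.1 (by simpa using hvK)
    have := hv.2
    simp [neg_eq_zero.mp h0] at this
  obtain ⟨g, hgK, hgB⟩ := ProperCone.hyperplane_separation ⟨K, hK⟩ hBconv.neg hB.neg hdisj
  refine ⟨g, hgK, fun v hv hv0 => ?_⟩
  have hℓv : 0 < ℓ v := lt_of_lt_of_le (by positivity) (hℓ v hv)
  have := hgB (-((ℓ v)⁻¹ • v)) (by
    rw [Set.mem_neg, neg_neg]
    exact ⟨σ.smul_mem (inv_nonneg.2 hℓv.le) hv, by simp [hℓv.ne']⟩)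
  simp only [map_neg, map_smul, smul_eq_mul, neg_lt_zero] at this
  exact pos_of_mul_pos_right this (by positivity)

theorem exists_dual_pos_of_salient (σ : PointedCone ℝ E) (hσ : IsClosed (σ : Set E))
    (hsal : (σ : ConvexCone ℝ E).Salient) :
    ∃ ℓ : StrongDual ℝ E, ∀ v ∈ σ, v ≠ 0 → 0 < ℓ v := by
  obtain ⟨ℓ, m, hm, hℓ⟩ := σ.exists_dual_ge_mul_norm_of_salient hσ hsal
  exact ⟨ℓ, fun v hv hv0 => (mul_pos hm (norm_pos_iff.2 hv0)).trans_le (hℓ v hv)⟩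

end Dual

end PointedCone

section Faces

variable {E : Type*} [AddCommGroup E] [Module ℝ E]

lemma isFace_setOf_eq_of_forall_le {K : Set E} (g : E →ₗ[ℝ] ℝ) {r : ℝ}
    (h : ∀ z ∈ K, r ≤ g z) : IsFace K {z ∈ K | g z = r} :=
  Or.inr ⟨-g, -r, fun z hz => by simpa using h z hz, by simp⟩

lemma isFace_add_pointedCone {C : Set E} (σ : PointedCone ℝ E) (g : E →ₗ[ℝ] ℝ) {r : ℝ}
    (hC : ∀ c ∈ C, r ≤ g c) (hσ : ∀ v ∈ σ, v ≠ 0 → 0 < g v) :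
    IsFace (C + (σ : Set E)) {z ∈ C | g z = r} := by
  have hσ' : ∀ v ∈ σ, 0 ≤ g v := fun v hv => by
    rcases eq_or_ne v 0 with rfl | hv0
    exacts [by simp, (hσ v hv hv0).le]
  have hle : ∀ z ∈ C + (σ : Set E), r ≤ g z := by
    rintro _ ⟨c, hc, v, hv, rfl⟩
    linarith [hC c hc, hσ' v hv, map_add g c v]
  convert isFace_setOf_eq_of_forall_le g hle using 1
  ext z
  constructor
  · rintro ⟨hz, rfl⟩
    exact ⟨⟨z, hz, 0, σ.zero_mem, add_zero z⟩, rfl⟩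
  · rintro ⟨⟨c, hc, v, hv, rfl⟩, hgz⟩
    obtain rfl : v = 0 := by
      by_contra hv0
      linarith [hC c hc, hσ v hv hv0, map_add g c v]
    simpa using And.intro hc hgz

end Faces

section Polytope

variable {E : Type*} [AddCommGroup E] [Module ℝ E]

lemma exists_smul_eq_of_mem_hull_sub_image {C s : Set E} (hC : Convex ℝ C) (hsC : s ⊆ C)
    {y : E} (hy : y ∈ C) {k : E} (hk : k ∈ PointedCone.hull ℝ ((· - y) '' s)) :
    ∃ r : ℝ, 0 < r ∧ ∃ z, y + z ∈ C ∧ k = r • z := by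
  set S := (fun z => y + z) ⁻¹' C
  have hpointed : (ConvexCone.hull ℝ S).Pointed := ConvexCone.subset_hull (by simpa [S] using hy)
  have hle : PointedCone.hull ℝ ((· - y) '' s) ≤
      (ConvexCone.hull ℝ S).toPointedCone hpointed := by
    refine Submodule.span_le.2 ?_
    rintro _ ⟨u, hu, rfl⟩
    exact ConvexCone.subset_hull (by simpa [S] using hsC hu)
  obtain ⟨r, hr, z, hz, rfl⟩ :=
    (ConvexCone.mem_hull_of_convex (hC.translate_preimage_right y)).1 (hle hk)
  exact ⟨r, hr, z, hz, rfl⟩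

theorem exists_minimal_sub_mem [TopologicalSpace E] [IsTopologicalAddGroup E] {C : Set E}
    (hC : IsCompact C) (σ : PointedCone ℝ E) (hσ : IsClosed (σ : Set E)) (ℓ : StrongDual ℝ E)
    (hℓ : ∀ v ∈ σ, v ≠ 0 → 0 < ℓ v) {x : E} (hx : x ∈ C + (σ : Set E)) :
    ∃ y ∈ C, x - y ∈ σ ∧ ∀ c ∈ C, y - c ∈ σ → c = y := by
  set D := C ∩ {c | x - c ∈ σ}
  have hD : IsCompact D := hC.inter_right (hσ.preimage (continuous_const.sub continuous_id))
  obtain ⟨c₀, hc₀, v₀, hv₀, hx⟩ := hx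
  obtain ⟨y, ⟨hyC, hxy⟩, hymin⟩ :=
    hD.exists_isMinOn ⟨c₀, hc₀, by simpa [← hx] using hv₀⟩ ℓ.continuous.continuousOn
  refine ⟨y, hyC, hxy, fun c hc hyc => ?_⟩
  have hcD : c ∈ D := ⟨hc, by simpa using σ.add_mem hxy hyc⟩
  by_contra hne
  have := hℓ _ hyc (sub_ne_zero.2 (Ne.symm hne))
  linarith [isMinOn_iff.1 hymin c hcD, map_sub ℓ y c]

end Polytope

theorem exists_dual_le_on_convexHull_of_minimal {E : Type*} [NormedAddCommGroup E]
    [NormedSpace ℝ E] [FiniteDimensional ℝ E] (s : Finset E) (σ : PointedCone ℝ E)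
    (hσ : IsClosed (σ : Set E)) (hsal : (σ : ConvexCone ℝ E).Salient) {y : E}
    (hy : y ∈ convexHull ℝ (s : Set E))
    (hmin : ∀ c ∈ convexHull ℝ (s : Set E), y - c ∈ σ → c = y) :
    ∃ g : StrongDual ℝ E, (∀ c ∈ convexHull ℝ (s : Set E), g y ≤ g c) ∧
      ∀ v ∈ σ, v ≠ 0 → 0 < g v := by
  classical
  set K := PointedCone.hull ℝ ((· - y) '' (s : Set E))
  have hK : IsClosed (K : Set E) := by
    simpa [K] using PointedCone.isClosed_hull_finset (s.image (· - y))
  have hKσ : ∀ v ∈ σ, -v ∈ K → v = 0 := by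
    intro v hv hvK
    obtain ⟨r, hr, z, hz, hvz⟩ :=
      exists_smul_eq_of_mem_hull_sub_image (convex_convexHull ℝ _) (subset_convexHull ℝ _) hy hvK
    have hyz : y - (y + z) = r⁻¹ • v := by
      rw [neg_eq_iff_eq_neg] at hvz
      rw [hvz, smul_neg, smul_smul, inv_mul_cancel₀ hr.ne', one_smul]
      abel
    have hz0 : z = 0 := by simpa using hmin _ hz (hyz ▸ σ.smul_mem (inv_nonneg.2 hr.le) hv)
    simpa [hz0] using hvz
  obtain ⟨g, hgK, hgσ⟩ := PointedCone.exists_dual_nonneg_and_pos_of_salient K σ hK hσ hsal hKσ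
  refine ⟨g, fun c hc => convexHull_min (fun u hu => ?_)
    (convex_halfSpace_ge g.toLinearMap.isLinear (g y)) hc, hgσ⟩
  simpa using hgK (u - y) (PointedCone.subset_hull ⟨u, hu, rfl⟩)

/-- The Claim in Remark 4.6: every point of the conical polyhedron
`P = C + σ` dominates (w.r.t. the salient closed convex cone `σ`) a point of a
face of `C` that is also a face of `P`. -/
theorem stmt11 (M : Type*) [NormedAddCommGroup M] [NormedSpace ℝ M]
    [FiniteDimensional ℝ M]
    (s : Finset M) (C : Set M) (hC : C = convexHull ℝ (s : Set M))
    (σ : Set M)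
    (hσclosed : IsClosed σ) (hσconv : Convex ℝ σ)
    (hσcone : ∀ (c : ℝ), 0 ≤ c → ∀ x ∈ σ, c • x ∈ σ)
    (hσsalient : σ ∩ (-σ) = {0}) :
    ∀ x ∈ C + σ, ∃ F : Set M, IsFace C F ∧ IsFace (C + σ) F ∧
      ∃ y ∈ F, x - y ∈ σ := by
  intro x hx
  have h0 : (0 : M) ∈ σ := (hσsalient.symm ▸ rfl : (0 : M) ∈ σ ∩ -σ).1
  obtain ⟨σ, rfl⟩ : ∃ σ' : PointedCone ℝ M, (σ' : Set M) = σ :=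
    ⟨.ofConeComb σ ⟨0, h0⟩ fun u hu v hv a ha b hb =>
      hσconv.add_mem_of_smul_mem hσcone (hσcone a ha u hu) (hσcone b hb v hv), rfl⟩
  have hsal : (σ : ConvexCone ℝ M).Salient := σ.salient_iff_inter_neg_eq_singleton.2 hσsalient
  subst hC
  obtain ⟨ℓ, hℓ⟩ := σ.exists_dual_pos_of_salient hσclosed hsal
  obtain ⟨y, hy, hxy, hmin⟩ :=
    exists_minimal_sub_mem (s.finite_toSet.isCompact_convexHull ℝ) σ hσclosed ℓ hℓ hx
  obtain ⟨g, hgC, hgσ⟩ := exists_dual_le_on_convexHull_of_minimal s σ hσclosed hsal hy hmin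
  exact ⟨_, isFace_setOf_eq_of_forall_le g.toLinearMap hgC,
    isFace_add_pointedCone σ g.toLinearMap hgC hgσ, y, ⟨hy, rfl⟩, hxy⟩
end

section
/- Let V be a 2-dimensional real vector space with basis c, f and symmetric bilinear form determined by c·c = −e, c·f = 1, f·f = 0, where e > 0. Fix integers m, n with 0 < m·e < n and a real a > 0. Set L = m·c + n·f and H = (m²ea/(2nm − m²e))·c + ((2n(n − me) + m²e²)a/(2nm − m²e))·f. Then: (i) L·L = 2mn − m²e > 0; (ii) 2((L·H)/(L·L))·L − H = a·c + a·e·f; and (iii) (a·c + a·e·f)·c = 0. -/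
/-! The coefficients of `H` are chosen so that `L·H = a n`, while `L² = m (2n − me)`;
hence `2 (L·H / L²) L − H` collapses to `a (c + e f)`, which is orthogonal to `c` because `c² = −e` and `c·f = 1`. -/

theorem LinearMap.BilinForm.apply_smul_add_smul {R M : Type*} [CommSemiring R] [AddCommMonoid M]
    [Module R M] (q : LinearMap.BilinForm R M) (c f : M) (x y u v : R) :
    q (x • c + y • f) (u • c + v • f)
      = x * u * q c c + x * v * q c f + y * u * q f c + y * v * q f f := by
  simp only [map_add, map_smul, LinearMap.add_apply, LinearMap.smul_apply, smul_eq_mul]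
  ring

theorem stmt12_general (V : Type*) [AddCommGroup V] [Module ℝ V]
    (q : LinearMap.BilinForm ℝ V) (hsym : ∀ x y, q x y = q y x)
    (c f : V)
    (e : ℝ) (he : 0 < e)
    (hcc : q c c = -e) (hcf : q c f = 1) (hff : q f f = 0)
    (m n : ℤ) (hme : 0 < (m : ℝ) * e) (hmen : (m : ℝ) * e < (n : ℝ))
    (a : ℝ)
    (L H : V)
    (hL : L = (m : ℝ) • c + (n : ℝ) • f)
    (hH : H = ((m : ℝ) ^ 2 * e * a / (2 * (n : ℝ) * (m : ℝ) - (m : ℝ) ^ 2 * e)) • c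
        + ((2 * (n : ℝ) * ((n : ℝ) - (m : ℝ) * e) + (m : ℝ) ^ 2 * e ^ 2) * a
            / (2 * (n : ℝ) * (m : ℝ) - (m : ℝ) ^ 2 * e)) • f) :
    (q L L = 2 * (m : ℝ) * (n : ℝ) - (m : ℝ) ^ 2 * e ∧ 0 < q L L)
    ∧ (2 * (q L H / q L L)) • L - H = a • c + (a * e) • f
    ∧ q (a • c + (a * e) • f) c = 0 := by
  have hform : ∀ x y u v : ℝ, q (x • c + y • f) (u • c + v • f) = x * v + y * u - e * x * u := by
    intro x y u v
    rw [q.apply_smul_add_smul, hcc, hcf, hsym f c, hcf, hff]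
    ring
  have hm : 0 < (m : ℝ) := pos_of_mul_pos_left hme he.le
  have hm0 : (m : ℝ) ≠ 0 := hm.ne'
  have h2n : (2 * n - m * e : ℝ) ≠ 0 := by linarith
  have hden : 2 * (n : ℝ) * m - m ^ 2 * e = m * (2 * n - m * e) := by ring
  rw [hden] at hH
  have hLL : q L L = 2 * m * n - m ^ 2 * e := by rw [hL, hform]; ring
  have hLH : q L H = a * n := by rw [hL, hH, hform]; field_simp; ring
  refine ⟨⟨hLL, by nlinarith⟩, ?_, ?_⟩
  · rw [hLH, hLL, hL, hH]
    match_scalars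
    · field_simp
    · field_simp
      ring
  · calc q (a • c + (a * e) • f) c = q (a • c + (a * e) • f) ((1 : ℝ) • c + (0 : ℝ) • f) := by
          simp
      _ = 0 := by rw [hform]; ring

/-- The key computation on the Hirzebruch surface in the proof of Theorem 6.1:
with `c·c = −e`, `c·f = 1`, `f·f = 0`, `0 < me < n`, `a > 0`,
`L = m c + n f` and the explicit `H`, one has `L² = 2mn − m²e > 0`,
`2(L·H/L²)L − H = a c + a e f`, and `(a c + a e f)·c = 0`. -/
theorem stmt12 (V : Type*) [AddCommGroup V] [Module ℝ V]
    (q : LinearMap.BilinForm ℝ V) (hsym : ∀ x y, q x y = q y x)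
    (c f : V) (hbasis : ∃ b : Module.Basis (Fin 2) ℝ V, b 0 = c ∧ b 1 = f)
    (e : ℝ) (he : 0 < e)
    (hcc : q c c = -e) (hcf : q c f = 1) (hff : q f f = 0)
    (m n : ℤ) (hme : 0 < (m : ℝ) * e) (hmen : (m : ℝ) * e < (n : ℝ))
    (a : ℝ) (ha : 0 < a)
    (L H : V)
    (hL : L = (m : ℝ) • c + (n : ℝ) • f)
    (hH : H = ((m : ℝ) ^ 2 * e * a / (2 * (n : ℝ) * (m : ℝ) - (m : ℝ) ^ 2 * e)) • c
        + ((2 * (n : ℝ) * ((n : ℝ) - (m : ℝ) * e) + (m : ℝ) ^ 2 * e ^ 2) * a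
            / (2 * (n : ℝ) * (m : ℝ) - (m : ℝ) ^ 2 * e)) • f) :
    (q L L = 2 * (m : ℝ) * (n : ℝ) - (m : ℝ) ^ 2 * e ∧ 0 < q L L)
    ∧ (2 * (q L H / q L L)) • L - H = a • c + (a * e) • f
    ∧ q (a • c + (a * e) • f) c = 0 :=
  stmt12_general V q hsym c f e he hcc hcf hff m n hme hmen a L H hL hH
end

section
/- Let V be a real vector space with symmetric bilinear form (x·y) satisfying the Hodge index property (x·x > 0 and x·y = 0 imply y·y ≤ 0). Let L, H, C ∈ V with L·L > 0, L·H > 0, B := ((L·H)/(L·L))L − H ≠ 0, B·B < 0, and suppose (2((L·H)/(L·L))L − H)·(2((L·H)/(L·L))L − H) ≥ 0 and H·(L − C) ≥ 0 and (2((L·H)/(L·L))L − H)·C ≥ 0. Then 2(C·L)(L·H) − (C·H)(L·L) − (L·H)(C·C) ≥ (L·L)(L·H)·((C·L)/(L·L) + (C·B)/(H·L))·(1 − (C·L)/(L·L) + (C·B)/(H·L)), and the right-hand side is a product of two nonnegative factors. -/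
/-!
Write `t = (L·H)/(L·L)`, so that `H = t L - B` with `L·B = 0` and `2 t L - H = t L + B`.
Expanding in these coordinates, the two factors are `((t L + B)·C)/(L·H)` and `(H·(L - C))/(L·H)`,
which gives their signs. For the inequality, the Hodge index property applied to the component of
`C` orthogonal to `L` and `B` yields `C·C ≤ (C·L)²/(L·L) + (C·B)²/(B·B)`; after this substitution the
difference of the two sides is a multiple of `(t L + B)·(t L + B) = (L·H)²/(L·L) + B·B ≥ 0` with a
nonnegative coefficient, since `B·B < 0`.
-/

namespace LinearMap.BilinForm

variable {V : Type*} [AddCommGroup V] [Module ℝ V] {q : LinearMap.BilinForm ℝ V}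

theorem apply_self_le_of_nonpos_on_orthogonal (hq : q.IsSymm) {L B : V}
    (hL : ∀ y, q L y = 0 → q y y ≤ 0) (hLL : q L L ≠ 0) (hBB : q B B ≠ 0) (hLB : q L B = 0)
    (C : V) : q C C ≤ q C L ^ 2 / q L L + q C B ^ 2 / q B B := by
  have hBL : q B L = 0 := by rw [hq.eq, hLB]
  set D := C - (q C L / q L L) • L - (q C B / q B B) • B
  have hLD : q L D = 0 := by
    simp only [D, map_sub, map_smul, smul_eq_mul, hq.eq L C, hLB]
    field_simp; ring
  have hDD : q D D = q C C - q C L ^ 2 / q L L - q C B ^ 2 / q B B := by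
    simp only [D, map_sub, map_smul, LinearMap.sub_apply, LinearMap.smul_apply, smul_eq_mul,
      hq.eq L C, hq.eq B C, hLB, hBL]
    field_simp; ring
  linarith [hL D hLD]

end LinearMap.BilinForm

theorem scalar_refined_hodge_bound {a h b cL cB cc : ℝ} (ha : 0 < a) (hh : 0 < h) (hb : b < 0)
    (hab : 0 ≤ h ^ 2 / a + b) (hcc : cc ≤ cL ^ 2 / a + cB ^ 2 / b) :
    a * h * (cL / a + cB / h) * (1 - cL / a + cB / h) ≤ h * cL + a * cB - h * cc := by
  have hbh : b * h < 0 := mul_neg_of_neg_of_pos hb hh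
  have hb0 : b ≠ 0 := hb.ne
  have hdiff : h * cL + a * cB - h * cc - a * h * (cL / a + cB / h) * (1 - cL / a + cB / h)
      = h * (cL ^ 2 / a + cB ^ 2 / b - cc) + cB ^ 2 * (h ^ 2 / a + b) * (-(a / (b * h))) := by
    field_simp; ring
  have hcoef : 0 ≤ -(a / (b * h)) := neg_nonneg.mpr (div_nonpos_of_nonneg_of_nonpos ha.le hbh.le)
  linarith [mul_nonneg hh.le (sub_nonneg.mpr hcc), mul_nonneg (mul_nonneg (sq_nonneg cB) hab) hcoef]

theorem stmt13_general (V : Type*) [AddCommGroup V] [Module ℝ V]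
    (q : LinearMap.BilinForm ℝ V) (hsym : ∀ x y, q x y = q y x)
    (hodge : ∀ x y, 0 < q x x → q x y = 0 → q y y ≤ 0)
    (L H C : V)
    (hLL : 0 < q L L) (hLH : 0 < q L H)
    (B : V) (hB : B = (q L H / q L L) • L - H)
    (hBB : q B B < 0)
    (hAA : 0 ≤ q ((2 * (q L H / q L L)) • L - H) ((2 * (q L H / q L L)) • L - H))
    (hHLC : 0 ≤ q H (L - C))
    (hAC : 0 ≤ q ((2 * (q L H / q L L)) • L - H) C) :
    2 * q C L * q L H - q C H * q L L - q L H * q C C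
        ≥ q L L * q L H * (q C L / q L L + q C B / q H L)
            * (1 - q C L / q L L + q C B / q H L)
      ∧ 0 ≤ q C L / q L L + q C B / q H L
      ∧ 0 ≤ 1 - q C L / q L L + q C B / q H L := by
  have hHL : q H L = q L H := hsym H L
  have hLB : q L B = 0 := by
    simp only [hB, map_sub, map_smul, smul_eq_mul]
    field_simp; ring
  have hCB : q C B = q L H / q L L * q C L - q C H := by
    simp only [hB, map_sub, map_smul, smul_eq_mul]
  have hAA' : q ((2 * (q L H / q L L)) • L - H) ((2 * (q L H / q L L)) • L - H)
      = q L H ^ 2 / q L L + q B B := by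
    simp only [hB, map_sub, map_smul, LinearMap.sub_apply, LinearMap.smul_apply, smul_eq_mul, hHL]
    field_simp; ring
  have hAC' : q ((2 * (q L H / q L L)) • L - H) C = q L H * (q C L / q L L + q C B / q H L) := by
    simp only [map_sub, map_smul, LinearMap.sub_apply, LinearMap.smul_apply, smul_eq_mul,
      hsym L C, hsym H C, hCB, hHL]
    field_simp; ring
  have hHLC' : q H (L - C) = q L H * (1 - q C L / q L L + q C B / q H L) := by
    simp only [map_sub, hHL, hsym H C, hCB]
    field_simp; ring
  have hCC := LinearMap.BilinForm.apply_self_le_of_nonpos_on_orthogonal ⟨hsym⟩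
    (hodge L · hLL) hLL.ne' hBB.ne hLB C
  refine ⟨?_, nonneg_of_mul_nonneg_right (hAC' ▸ hAC) hLH,
    nonneg_of_mul_nonneg_right (hHLC' ▸ hHLC) hLH⟩
  have hLHS : 2 * q C L * q L H - q C H * q L L - q L H * q C C
      = q L H * q C L + q L L * q C B - q L H * q C C := by
    rw [hCB]; field_simp; ring
  rw [hHL, hLHS]
  exact scalar_refined_hodge_bound hLL hLH hBB (hAA' ▸ hAA) hCC

/-- Refined quantitative version of Proposition 5.1 (Remark 5.2). -/
theorem stmt13 (V : Type*) [AddCommGroup V] [Module ℝ V]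
    (q : LinearMap.BilinForm ℝ V) (hsym : ∀ x y, q x y = q y x)
    (hodge : ∀ x y, 0 < q x x → q x y = 0 → q y y ≤ 0)
    (L H C : V)
    (hLL : 0 < q L L) (hLH : 0 < q L H)
    (B : V) (hB : B = (q L H / q L L) • L - H)
    (hBne : B ≠ 0) (hBB : q B B < 0)
    (hAA : 0 ≤ q ((2 * (q L H / q L L)) • L - H) ((2 * (q L H / q L L)) • L - H))
    (hHLC : 0 ≤ q H (L - C))
    (hAC : 0 ≤ q ((2 * (q L H / q L L)) • L - H) C) :
    2 * q C L * q L H - q C H * q L L - q L H * q C C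
        ≥ q L L * q L H * (q C L / q L L + q C B / q H L)
            * (1 - q C L / q L L + q C B / q H L)
      ∧ 0 ≤ q C L / q L L + q C B / q H L
      ∧ 0 ≤ 1 - q C L / q L L + q C B / q H L :=
  stmt13_general V q hsym hodge L H C hLL hLH B hB hBB hAA hHLC hAC
end
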